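/- arXiv:1912.06438 — 2 statements merged into one kernel-verified Lean document; each statement's English description precedes it below -/
import Mathlib

section
/- (Diameter bound) Let G be a connected weighted graph with Deg_max < ∞ satisfying CD(ρ, n), and suppose that for some K, T > 0 the bound ‖P_t^{2ρ}‖_{∞,∞} ≤ e^{K(T-t)} holds for all t > 0, together with the gradient estimate Γ(P_t f) ≤ P_t^{2ρ} Γ f. Then the combinatorial diameter of G satisfies diam(G) ≤ 4 Deg_max e^{KT/2} / K. -/
open Real ENNReal

structure WGraph (V : Type*) where
  w : V → V → ℝ
  m : V → ℝ
  symm : ∀ x y, w x y = w y x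
  nonneg : ∀ x y, 0 ≤ w x y
  loopless : ∀ x, w x x = 0
  mpos : ∀ x, 0 < m x
  locFin : ∀ x, (Function.support (w x)).Finite

namespace WGraph

variable {V : Type*} (G : WGraph V)

/-- transition weights -/
noncomputable def q (x y : V) : ℝ := G.w x y / G.m x

/-- the graph Laplacian `Δ` -/
noncomputable def lap (f : V → ℝ) (x : V) : ℝ := ∑' y, G.q x y * (f y - f x)

/-- the weighted vertex degree -/
noncomputable def deg (x : V) : ℝ := ∑' y, G.q x y

/-- the bilinear carré du champ operator `Γ(f,g)` -/
noncomputable def gammaB (f g : V → ℝ) (x : V) : ℝ :=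
  (1 / 2) * (G.lap (f * g) x - f x * G.lap g x - g x * G.lap f x)

/-- the carré du champ operator `Γ f` -/
noncomputable def gamma (f : V → ℝ) : V → ℝ := G.gammaB f f

/-- the iterated carré du champ operator `Γ₂ f` -/
noncomputable def gamma2 (f : V → ℝ) (x : V) : ℝ :=
  (1 / 2) * G.lap (G.gamma f) x - G.gammaB f (G.lap f) x

/-- boundedness of a function -/
def Bdd (f : V → ℝ) : Prop := ∃ C, ∀ x, |f x| ≤ C

/-- the variable curvature dimension condition `CD(ρ,n)` -/
def CD (ρ : V → ℝ) (n : ℝ≥0∞) : Prop :=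
  ∀ f, Bdd f → ∀ x, ρ x * G.gamma f x + (n⁻¹).toReal * (G.lap f x) ^ 2 ≤ G.gamma2 f x

/-- the underlying simple graph (for the combinatorial metric) -/
def toSimpleGraph : SimpleGraph V where
  Adj x y := 0 < G.w x y
  symm := ⟨fun x y (h : 0 < G.w x y) => by rwa [G.symm] at h⟩
  loopless := ⟨fun x (h : 0 < G.w x x) => by rw [G.loopless] at h; exact lt_irrefl 0 h⟩

/-- `P` is the semigroup `e^{-t(L+W)}` generated by `-(L+W) = Δ - W`. -/
def IsSemigroup (W : V → ℝ) (P : ℝ → (V → ℝ) → V → ℝ) : Prop :=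
  (∀ f, P 0 f = f) ∧
  (∀ s t, 0 ≤ s → 0 ≤ t → ∀ f, P (s + t) f = P s (P t f)) ∧
  (∀ t f g, P t (f + g) = P t f + P t g) ∧
  (∀ t (c : ℝ) f, P t (c • f) = c • P t f) ∧
  (∀ f, Bdd f → ∀ t, 0 ≤ t → Bdd (P t f)) ∧
  (∀ f, Bdd f → ∀ x, ContinuousOn (fun s => P s f x) (Set.Ici 0)) ∧
  (∀ f, Bdd f → ∀ x t, 0 < t →
    HasDerivAt (fun s => P s f x) (G.lap (P t f) x - W x * P t f x) t) ∧
  (∀ f, Bdd f → (∀ x, 0 ≤ f x) → ∀ t, 0 ≤ t → ∀ x, 0 ≤ P t f x)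

end WGraph

/- ### Auxiliary lemmas -/

namespace WGraph

variable {V : Type*} (G : WGraph V)

lemma q_nonneg (x y : V) : 0 ≤ G.q x y := div_nonneg (G.nonneg x y) (G.mpos x).le

lemma q_pos_iff (x y : V) : 0 < G.q x y ↔ 0 < G.w x y := by
  constructor
  · intro h
    rcases (G.nonneg x y).lt_or_eq with h'|h'
    · exact h'
    · exfalso; simp [q, ← h'] at h
  · intro h; exact div_pos h (G.mpos x)

/-- the neighbours of a vertex, as a finset -/
noncomputable def nbr (x : V) : Finset V := (G.locFin x).toFinset

lemma q_zero_of_not_mem {x y : V} (h : y ∉ G.nbr x) : G.q x y = 0 := by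
  simp only [nbr, Set.Finite.mem_toFinset, Function.mem_support, not_not] at h
  simp [q, h]

lemma summable_q_mul (x : V) (F : V → ℝ) : Summable (fun y => G.q x y * F y) :=
  summable_of_ne_finset_zero (s := G.nbr x) fun y hy => by
    rw [G.q_zero_of_not_mem hy, zero_mul]

lemma tsum_q_mul (x : V) (F : V → ℝ) :
    ∑' y, G.q x y * F y = ∑ y ∈ G.nbr x, G.q x y * F y :=
  tsum_eq_sum fun y hy => by rw [G.q_zero_of_not_mem hy, zero_mul]

lemma deg_eq (x : V) : G.deg x = ∑ y ∈ G.nbr x, G.q x y := by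
  rw [deg, tsum_eq_sum fun y hy => G.q_zero_of_not_mem hy]

lemma deg_nonneg (x : V) : 0 ≤ G.deg x := by
  rw [deg_eq]; exact Finset.sum_nonneg fun y _ => G.q_nonneg x y

lemma gamma_eq (f : V → ℝ) (z : V) :
    G.gamma f z = (1 / 2) * ∑ w ∈ G.nbr z, G.q z w * (f w - f z) ^ 2 := by
  simp only [gamma, gammaB, lap, tsum_q_mul]
  rw [Finset.mul_sum, Finset.mul_sum, ← Finset.sum_sub_distrib, ← Finset.sum_sub_distrib,
    Finset.mul_sum]
  apply Finset.sum_congr rfl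
  intro w _
  simp only [Pi.mul_apply]
  ring

lemma gamma_eq_tsum (f : V → ℝ) (z : V) :
    G.gamma f z = (1 / 2) * ∑' w, G.q z w * (f w - f z) ^ 2 := by
  rw [gamma_eq, tsum_q_mul]

lemma gamma_nonneg (f : V → ℝ) (z : V) : 0 ≤ G.gamma f z := by
  rw [gamma_eq]
  refine mul_nonneg (by norm_num) (Finset.sum_nonneg fun w _ => ?_)
  exact mul_nonneg (G.q_nonneg z w) (sq_nonneg _)

lemma lap_sq_le (g : V → ℝ) (z : V) :
    (G.lap g z) ^ 2 ≤ 2 * G.deg z * G.gamma g z := by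
  rw [lap, tsum_q_mul, gamma_eq, deg_eq]
  have h := Finset.sum_mul_sq_le_sq_mul_sq (G.nbr z)
    (fun y => Real.sqrt (G.q z y)) (fun y => Real.sqrt (G.q z y) * (g y - g z))
  have e1 : ∀ y ∈ G.nbr z, Real.sqrt (G.q z y) * (Real.sqrt (G.q z y) * (g y - g z))
      = G.q z y * (g y - g z) := by
    intro y _
    rw [← mul_assoc, Real.mul_self_sqrt (G.q_nonneg z y)]
  have e2 : ∀ y ∈ G.nbr z, Real.sqrt (G.q z y) ^ 2 = G.q z y := by
    intro y _; exact Real.sq_sqrt (G.q_nonneg z y)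
  have e3 : ∀ y ∈ G.nbr z, (Real.sqrt (G.q z y) * (g y - g z)) ^ 2
      = G.q z y * (g y - g z) ^ 2 := by
    intro y _; rw [mul_pow, Real.sq_sqrt (G.q_nonneg z y)]
  rw [Finset.sum_congr rfl e1, Finset.sum_congr rfl e2, Finset.sum_congr rfl e3] at h
  calc (∑ y ∈ G.nbr z, G.q z y * (g y - g z)) ^ 2
      ≤ (∑ y ∈ G.nbr z, G.q z y) * ∑ y ∈ G.nbr z, G.q z y * (g y - g z) ^ 2 := h
    _ = 2 * (∑ y ∈ G.nbr z, G.q z y) * ((1:ℝ)/2 * ∑ y ∈ G.nbr z, G.q z y * (g y - g z) ^ 2) := by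
        ring

lemma edge_sq_le (g : V → ℝ) {u v : V} (h : 0 < G.w u v) :
    G.q u v * (g v - g u) ^ 2 ≤ 2 * G.gamma g u := by
  rw [gamma_eq_tsum]
  have hs : Summable (fun y => G.q u y * (g y - g u) ^ 2) :=
    G.summable_q_mul u (fun y => (g y - g u) ^ 2)
  have h2 := Summable.le_tsum hs v (fun b _ => mul_nonneg (G.q_nonneg u b) (sq_nonneg _))
  linarith

end WGraph

/-- 1-Lipschitz property of `min · c`. -/
lemma abs_min_sub_min_le (a b c : ℝ) : |min a c - min b c| ≤ |a - b| := by
  rw [min_def, min_def]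
  split_ifs <;>
    (rw [abs_le]; constructor <;>
      linarith [neg_abs_le (a - b), le_abs_self (a - b), abs_nonneg (a - b)])

open WGraph in
theorem diameter_bound {V : Type*} (G : WGraph V)
    (hconn : G.toSimpleGraph.Preconnected)
    (hD : BddAbove (Set.range G.deg))
    (ρ : V → ℝ) (n : ℝ≥0∞) (hn : n ≠ 0) (hCD : G.CD ρ n)
    (K T : ℝ) (hK : 0 < K) (hT : 0 < T)
    (P Q : ℝ → (V → ℝ) → V → ℝ)
    (hP : G.IsSemigroup 0 P) (hQ : G.IsSemigroup (2 • ρ) Q)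
    (hQnorm : ∀ t, 0 < t → ∀ g : V → ℝ, ∀ C, 0 ≤ C → (∀ x, |g x| ≤ C) →
      ∀ x, |Q t g x| ≤ Real.exp (K * (T - t)) * C)
    (hgrad : ∀ f, Bdd f → ∀ t, 0 ≤ t → ∀ x, G.gamma (P t f) x ≤ Q t (G.gamma f) x) :
    ∀ x y : V, (G.toSimpleGraph.dist x y : ℝ)
      ≤ 4 * (⨆ z, G.deg z) * Real.exp (K * T / 2) / K := by
  intro x y
  haveI : Nonempty V := ⟨x⟩
  obtain ⟨hP1, -, -, -, -, hP6, hP7, -⟩ := hP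
  have hconn' : G.toSimpleGraph.Connected := ⟨hconn⟩
  set S := G.toSimpleGraph with hS
  set Deg : ℝ := ⨆ z, G.deg z with hDegdef
  have hdegle : ∀ z, G.deg z ≤ Deg := fun z => le_ciSup hD z
  have hDeg0 : 0 ≤ Deg := le_trans (G.deg_nonneg x) (hdegle x)
  set D : ℝ := (S.dist x y : ℝ) with hDd
  have hD0 : 0 ≤ D := Nat.cast_nonneg _
  set f : V → ℝ := fun z => min ((S.dist x z : ℝ)) D with hf
  -- f is bounded
  have hfB : Bdd f := by
    refine ⟨D, fun z => ?_⟩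
    rw [abs_le]
    constructor
    · have h0 : (0:ℝ) ≤ f z := le_min (Nat.cast_nonneg _) hD0
      linarith
    · exact min_le_right _ _
  -- f is 1-Lipschitz along edges
  have hlip : ∀ z u, 0 < G.w z u → (f u - f z) ^ 2 ≤ 1 := by
    intro z u hzu
    have hadj : S.Adj z u := hzu
    have h1 : S.dist x u ≤ S.dist x z + 1 := by
      have h := hconn'.dist_triangle (u := x) (v := z) (w := u)
      rwa [SimpleGraph.dist_eq_one_iff_adj.mpr hadj] at h
    have h2 : S.dist x z ≤ S.dist x u + 1 := by
      have h := hconn'.dist_triangle (u := x) (v := u) (w := z)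
      rwa [SimpleGraph.dist_eq_one_iff_adj.mpr hadj.symm] at h
    have hd : |((S.dist x u : ℝ)) - (S.dist x z : ℝ)| ≤ 1 := by
      rw [abs_le]
      have h1' : ((S.dist x u : ℝ)) ≤ (S.dist x z : ℝ) + 1 := by exact_mod_cast h1
      have h2' : ((S.dist x z : ℝ)) ≤ (S.dist x u : ℝ) + 1 := by exact_mod_cast h2
      constructor <;> linarith
    have hm : |f u - f z| ≤ 1 :=
      le_trans (abs_min_sub_min_le _ _ _) hd
    calc (f u - f z) ^ 2 = |f u - f z| ^ 2 := (sq_abs _).symm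
      _ ≤ 1 ^ 2 := by
          apply pow_le_pow_left₀ (abs_nonneg _) hm
      _ = 1 := one_pow 2
  -- the gradient of f is bounded
  have hgf : ∀ z, |G.gamma f z| ≤ Deg / 2 := by
    intro z
    rw [abs_of_nonneg (G.gamma_nonneg f z), G.gamma_eq]
    have hsum : ∑ w ∈ G.nbr z, G.q z w * (f w - f z) ^ 2 ≤ ∑ w ∈ G.nbr z, G.q z w := by
      apply Finset.sum_le_sum
      intro u _
      rcases (G.q_nonneg z u).lt_or_eq with hq|hq
      · have hw : 0 < G.w z u := (G.q_pos_iff z u).1 hq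
        nlinarith [hlip z u hw]
      · rw [← hq]; simp
    have hdz := hdegle z
    rw [G.deg_eq] at hdz
    linarith
  -- abbreviation for the main constant
  set c : ℝ := 2 * Deg * Real.exp (K * T / 2) / K with hc
  have hc0 : 0 ≤ c := by positivity
  -- pointwise derivative bound
  have hbound : ∀ (x' : V) (s : ℝ), 0 < s →
      |G.lap (P s f) x'| ≤ Deg * Real.exp (K * T / 2) * Real.exp ((-K / 2) * s) := by
    intro x' s hs
    set M : ℝ := Deg * Real.exp (K * T / 2) * Real.exp ((-K / 2) * s) with hM
    have hM0 : 0 ≤ M := mul_nonneg (mul_nonneg hDeg0 (Real.exp_pos _).le) (Real.exp_pos _).le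
    have hg2 : G.gamma (P s f) x' ≤ Q s (G.gamma f) x' := hgrad f hfB s hs.le x'
    have hq : |Q s (G.gamma f) x'| ≤ Real.exp (K * (T - s)) * (Deg / 2) :=
      hQnorm s hs (G.gamma f) (Deg / 2) (by linarith) hgf x'
    have h1 : (G.lap (P s f) x') ^ 2 ≤ 2 * G.deg x' * G.gamma (P s f) x' := G.lap_sq_le _ x'
    have hMsq : M ^ 2 = Deg ^ 2 * Real.exp (K * (T - s)) := by
      have e1 : Real.exp (K * T / 2) * Real.exp ((-K / 2) * s) = Real.exp (K * (T - s) / 2) := by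
        rw [← Real.exp_add]; congr 1; ring
      calc M ^ 2 = Deg ^ 2 * (Real.exp (K * T / 2) * Real.exp ((-K / 2) * s)) ^ 2 := by ring
        _ = Deg ^ 2 * Real.exp (K * (T - s) / 2) ^ 2 := by rw [e1]
        _ = Deg ^ 2 * (Real.exp (K * (T - s) / 2) * Real.exp (K * (T - s) / 2)) := by ring
        _ = Deg ^ 2 * Real.exp (K * (T - s)) := by rw [← Real.exp_add]; congr 1; ring
    have h2 : (G.lap (P s f) x') ^ 2 ≤ M ^ 2 := by
      rw [hMsq]
      have hγ0 := G.gamma_nonneg (P s f) x'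
      have hdx := hdegle x'
      have hd0 := G.deg_nonneg x'
      have hq2 := (abs_le.1 hq).2
      nlinarith [Real.exp_pos (K * (T - s))]
    exact abs_le_of_sq_le_sq h2 hM0
  -- semigroup estimate: |P_t f - f| ≤ c
  have hPtf : ∀ (x' : V) (t : ℝ), 0 < t → |P t f x' - f x'| ≤ c := by
    intro x' t ht
    set h : ℝ → ℝ := fun s => P s f x' with hh
    set A : ℝ → ℝ := fun s => c * Real.exp ((-K / 2) * s) with hA
    have hA' : ∀ s : ℝ, HasDerivAt A (c * (Real.exp ((-K / 2) * s) * (-K / 2))) s := by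
      intro s
      have h1 : HasDerivAt (fun u : ℝ => (-K / 2) * u) (-K / 2) s := by
        simpa using (hasDerivAt_id s).const_mul (-K / 2)
      exact (h1.exp).const_mul c
    have hcM : ∀ s : ℝ, c * (Real.exp ((-K / 2) * s) * (-K / 2))
        = -(Deg * Real.exp (K * T / 2) * Real.exp ((-K / 2) * s)) := by
      intro s
      rw [hc]
      field_simp
    have hconth : ContinuousOn h (Set.Icc 0 t) :=
      (hP6 f hfB x').mono (Set.Icc_subset_Ici_self)
    have hcontA : Continuous A :=
      continuous_const.mul (Real.continuous_exp.comp (continuous_const.mul continuous_id))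
    have hderivh : ∀ s ∈ Set.Ioo (0:ℝ) t,
        HasDerivAt h (G.lap (P s f) x') s := by
      intro s hs
      have := hP7 f hfB x' s hs.1
      simpa using this
    -- u = h + A is antitone
    have hu : AntitoneOn (fun s => h s + A s) (Set.Icc 0 t) := by
      apply antitoneOn_of_deriv_nonpos (convex_Icc 0 t)
      · exact hconth.add hcontA.continuousOn
      · intro s hs
        rw [interior_Icc] at hs
        exact ((hderivh s hs).add (hA' s)).differentiableAt.differentiableWithinAt
      · intro s hs
        rw [interior_Icc] at hs
        rw [show (fun s => h s + A s) = h + A from rfl, ((hderivh s hs).add (hA' s)).deriv]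
        have hb := hbound x' s hs.1
        have := (abs_le.1 hb).2
        rw [hcM s]
        linarith
    -- v = h - A is monotone
    have hv : MonotoneOn (fun s => h s - A s) (Set.Icc 0 t) := by
      apply monotoneOn_of_deriv_nonneg (convex_Icc 0 t)
      · exact hconth.sub hcontA.continuousOn
      · intro s hs
        rw [interior_Icc] at hs
        exact ((hderivh s hs).sub (hA' s)).differentiableAt.differentiableWithinAt
      · intro s hs
        rw [interior_Icc] at hs
        rw [show (fun s => h s - A s) = h - A from rfl, ((hderivh s hs).sub (hA' s)).deriv]
        have hb := hbound x' s hs.1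
        have := (abs_le.1 hb).1
        rw [hcM s]
        linarith
    have h0mem : (0:ℝ) ∈ Set.Icc (0:ℝ) t := ⟨le_refl 0, ht.le⟩
    have htmem : t ∈ Set.Icc (0:ℝ) t := ⟨ht.le, le_refl t⟩
    have hu' := hu h0mem htmem ht.le
    have hv' := hv h0mem htmem ht.le
    have hA0 : A 0 = c := by simp [hA]
    have hAt : 0 ≤ A t := mul_nonneg hc0 (Real.exp_pos _).le
    have hh0 : h 0 = f x' := by rw [hh]; simp only [hP1 f]
    rw [abs_le]
    constructor
    · simp only at hv'
      rw [hh0, hA0] at hv'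
      have : h t = P t f x' := rfl
      linarith
    · simp only at hu'
      rw [hh0, hA0] at hu'
      have : h t = P t f x' := rfl
      linarith
  -- walk estimate
  have hwalk : ∀ (u v : V) (p : S.Walk u v), ∃ C, 0 ≤ C ∧ ∀ t, 0 < t →
      |P t f u - P t f v| ≤ C * Real.exp ((-K / 2) * t) := by
    intro u v p
    induction p with
    | nil => exact ⟨0, le_refl 0, fun t ht => by simp⟩
    | @cons u' b' v' hadj p ih =>
      obtain ⟨C, hC0, hC⟩ := ih
      have hwub : 0 < G.w u' b' := hadj
      have hqpos : 0 < G.q u' b' := (G.q_pos_iff u' b').2 hwub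
      set E : ℝ := Real.sqrt (Deg * Real.exp (K * T) / G.q u' b') with hE
      have hE0 : 0 ≤ E := Real.sqrt_nonneg _
      refine ⟨E + C, by linarith, fun t ht => ?_⟩
      have h1 : G.q u' b' * (P t f b' - P t f u') ^ 2 ≤ 2 * G.gamma (P t f) u' :=
        G.edge_sq_le (P t f) hwub
      have h2 : G.gamma (P t f) u' ≤ Q t (G.gamma f) u' := hgrad f hfB t ht.le u'
      have h3 : |Q t (G.gamma f) u'| ≤ Real.exp (K * (T - t)) * (Deg / 2) :=
        hQnorm t ht _ (Deg / 2) (by linarith) hgf u'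
      have harg : 0 ≤ Deg * Real.exp (K * T) / G.q u' b' :=
        div_nonneg (mul_nonneg hDeg0 (Real.exp_pos _).le) hqpos.le
      have hΔ2 : (P t f u' - P t f b') ^ 2 ≤ Deg * Real.exp (K * (T - t)) / G.q u' b' := by
        rw [le_div_iff₀ hqpos]
        have hsq : (P t f u' - P t f b') ^ 2 = (P t f b' - P t f u') ^ 2 := by ring
        rw [hsq]
        have hq2 := (abs_le.1 h3).2
        nlinarith
      have hE2 : (E * Real.exp ((-K / 2) * t)) ^ 2
          = Deg * Real.exp (K * (T - t)) / G.q u' b' := by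
        rw [mul_pow, hE, Real.sq_sqrt harg]
        have e1 : Real.exp ((-K / 2) * t) ^ 2 = Real.exp (-(K * t)) := by
          rw [sq, ← Real.exp_add]; congr 1; ring
        rw [e1]
        have e2 : Real.exp (K * T) * Real.exp (-(K * t)) = Real.exp (K * (T - t)) := by
          rw [← Real.exp_add]; congr 1; ring
        rw [div_mul_eq_mul_div, mul_assoc, e2]
      have habs : |P t f u' - P t f b'| ≤ E * Real.exp ((-K / 2) * t) := by
        apply abs_le_of_sq_le_sq
        · rw [hE2]; exact hΔ2
        · exact mul_nonneg hE0 (Real.exp_pos _).le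
      have htri : |P t f u' - P t f v'| ≤ |P t f u' - P t f b'| + |P t f b' - P t f v'| :=
        abs_sub_le _ _ _
      have hC' := hC t ht
      have : (E + C) * Real.exp ((-K / 2) * t)
          = E * Real.exp ((-K / 2) * t) + C * Real.exp ((-K / 2) * t) := by ring
      linarith
  -- combine
  obtain ⟨C, hC0, hC⟩ := hwalk x y (hconn x y).some
  have hfx : f x = 0 := by
    have : f x = min ((S.dist x x : ℝ)) D := rfl
    rw [this, SimpleGraph.dist_self]
    simpa using min_eq_left hD0
  have hfy : f y = D := by
    have : f y = min ((S.dist x y : ℝ)) D := rfl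
    rw [this, ← hDd, min_self]
  have key : ∀ t, 0 < t →
      D ≤ 4 * Deg * Real.exp (K * T / 2) / K + C * Real.exp ((-K / 2) * t) := by
    intro t ht
    have h1 := hPtf x t ht
    have h2 := hPtf y t ht
    have h3 := hC t ht
    have habs1 := (abs_le.1 h1)
    have habs2 := (abs_le.1 h2)
    have habs3 := (abs_le.1 h3)
    have hDeq : D = f y - f x := by rw [hfx, hfy]; ring
    have hcc : 4 * Deg * Real.exp (K * T / 2) / K = 2 * c := by rw [hc]; ring
    rw [hDeq, hcc]
    linarith [habs1.1, habs1.2, habs2.1, habs2.2, habs3.1, habs3.2]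
  -- pass to the limit t → ∞
  have hlim : Filter.Tendsto
      (fun t : ℝ => 4 * Deg * Real.exp (K * T / 2) / K + C * Real.exp ((-K / 2) * t))
      Filter.atTop (nhds (4 * Deg * Real.exp (K * T / 2) / K + C * 0)) := by
    apply Filter.Tendsto.const_add
    apply Filter.Tendsto.const_mul
    have h1 : Filter.Tendsto (fun t : ℝ => (-K / 2) * t) Filter.atTop Filter.atBot :=
      (Filter.tendsto_const_mul_atBot_of_neg (show -K / 2 < 0 by linarith)).2 Filter.tendsto_id
    exact Real.tendsto_exp_atBot.comp h1
  have := ge_of_tendsto hlim (Filter.eventually_atTop.2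
    ⟨1, fun t ht => key t (lt_of_lt_of_le one_pos ht)⟩)
  rw [mul_zero, add_zero] at this
  exact this
end

section
/- (L¹ heat semigroup estimate à la Klartag–Milman) Let G be a finite connected weighted graph satisfying CD(ρ, ∞) and suppose the gradient bound ‖Γ(P_s g)‖_∞ ≤ (e^{KT}/s)‖g‖_∞² holds for all s > 0 and bounded g, for some K, T > 0. Then for every function f and t > 0, ‖f - P_t f‖_{L¹(V,m)} ≤ 2 e^{KT} √t · ‖√(Γ f)‖_{L¹(V,m)}. -/
open Real ENNReal

section Aux
open Real Finset
variable {V : Type*} [Fintype V] (G : WGraph V)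

lemma WGraph.bdd_fintype [Nonempty V] (f : V → ℝ) : WGraph.Bdd f :=
  ⟨⨆ y, |f y|, fun x => le_ciSup (Set.Finite.bddAbove (Set.finite_range fun y => |f y|)) x⟩

lemma WGraph.m_mul_lap (f : V → ℝ) (x : V) :
    G.m x * G.lap f x = ∑ y, G.w x y * (f y - f x) := by
  rw [WGraph.lap, tsum_fintype, Finset.mul_sum]
  refine Finset.sum_congr rfl fun y _ => ?_
  rw [WGraph.q]
  field_simp [(G.mpos x).ne']

lemma WGraph.m_mul_gammaB (u v : V → ℝ) (x : V) :
    G.m x * G.gammaB u v x = (1/2) * ∑ y, G.w x y * ((u y - u x) * (v y - v x)) := by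
  have h1 := G.m_mul_lap (u * v) x
  have h2 := G.m_mul_lap u x
  have h3 := G.m_mul_lap v x
  rw [WGraph.gammaB]
  have key : G.m x * ((1/2) * (G.lap (u*v) x - u x * G.lap v x - v x * G.lap u x))
      = (1/2) * ((G.m x * G.lap (u*v) x) - u x * (G.m x * G.lap v x) - v x * (G.m x * G.lap u x)) := by ring
  rw [key, h1, h2, h3]
  have expand : (∑ y, G.w x y * ((u*v) y - (u*v) x)) - u x * (∑ y, G.w x y * (v y - v x))
      - v x * (∑ y, G.w x y * (u y - u x))
      = ∑ y, G.w x y * ((u y - u x) * (v y - v x)) := by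
    rw [Finset.mul_sum, Finset.mul_sum, ← Finset.sum_sub_distrib, ← Finset.sum_sub_distrib]
    refine Finset.sum_congr rfl fun y _ => ?_
    simp only [Pi.mul_apply]; ring
  rw [expand]

omit [Fintype V] in
lemma WGraph.gammaB_comm (u v : V → ℝ) (x : V) : G.gammaB u v x = G.gammaB v u x := by
  rw [WGraph.gammaB, WGraph.gammaB, mul_comm u v]; ring

lemma WGraph.gamma_nonneg' (f : V → ℝ) (x : V) : 0 ≤ G.gamma f x := by
  have h : 0 ≤ G.m x * G.gamma f x := by
    rw [WGraph.gamma, G.m_mul_gammaB]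
    refine mul_nonneg (by norm_num) (Finset.sum_nonneg fun y _ => mul_nonneg (G.nonneg x y) (mul_self_nonneg _))
  exact (mul_nonneg_iff_of_pos_left (G.mpos x)).mp h

lemma WGraph.green (u v : V → ℝ) :
    ∑ x, G.m x * (u x * G.lap v x) = -∑ x, G.m x * G.gammaB u v x := by
  have lhs : ∑ x, G.m x * (u x * G.lap v x) = ∑ x, ∑ y, G.w x y * (u x * (v y - v x)) := by
    refine Finset.sum_congr rfl fun x _ => ?_
    rw [show G.m x * (u x * G.lap v x) = u x * (G.m x * G.lap v x) by ring, G.m_mul_lap,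
      Finset.mul_sum]
    exact Finset.sum_congr rfl fun y _ => by ring
  have rhs : ∑ x, G.m x * G.gammaB u v x
      = (1/2) * ∑ x, ∑ y, G.w x y * ((u y - u x) * (v y - v x)) := by
    rw [Finset.mul_sum]; exact Finset.sum_congr rfl fun x _ => G.m_mul_gammaB u v x
  have key : (∑ x, ∑ y, G.w x y * (u y * (v y - v x)))
      = -∑ x, ∑ y, G.w x y * (u x * (v y - v x)) := by
    rw [Finset.sum_comm, ← Finset.sum_neg_distrib]
    refine Finset.sum_congr rfl fun a _ => ?_
    rw [← Finset.sum_neg_distrib]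
    refine Finset.sum_congr rfl fun b _ => ?_
    rw [G.symm b a]; ring
  have split : ∑ x, ∑ y, G.w x y * ((u y - u x) * (v y - v x))
      = (∑ x, ∑ y, G.w x y * (u y * (v y - v x))) - ∑ x, ∑ y, G.w x y * (u x * (v y - v x)) := by
    rw [← Finset.sum_sub_distrib]
    refine Finset.sum_congr rfl fun x _ => ?_
    rw [← Finset.sum_sub_distrib]
    exact Finset.sum_congr rfl fun y _ => by ring
  rw [lhs, rhs, split, key]; ring

end Aux
section Aux2
open Real Finset
variable {V : Type*} [Fintype V] (G : WGraph V)

lemma WGraph.gammaB_le (u v : V → ℝ) (x : V) :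
    G.gammaB u v x ≤ Real.sqrt (G.gamma u x) * Real.sqrt (G.gamma v x) := by
  set a : V → ℝ := fun y => Real.sqrt (G.w x y) * (u y - u x) with ha
  set b : V → ℝ := fun y => Real.sqrt (G.w x y) * (v y - v x) with hb
  have hab : ∀ y, G.w x y * ((u y - u x) * (v y - v x)) = a y * b y := fun y => by
    rw [ha, hb]; simp only
    rw [show Real.sqrt (G.w x y) * (u y - u x) * (Real.sqrt (G.w x y) * (v y - v x))
      = (Real.sqrt (G.w x y) * Real.sqrt (G.w x y)) * ((u y - u x) * (v y - v x)) by ring,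
      Real.mul_self_sqrt (G.nonneg x y)]
  have ha2 : ∀ y, a y ^ 2 = G.w x y * ((u y - u x) * (u y - u x)) := fun y => by
    rw [ha]; simp only; rw [mul_pow, Real.sq_sqrt (G.nonneg x y)]; ring
  have hb2 : ∀ y, b y ^ 2 = G.w x y * ((v y - v x) * (v y - v x)) := fun y => by
    rw [hb]; simp only; rw [mul_pow, Real.sq_sqrt (G.nonneg x y)]; ring
  have hS : 2 * (G.m x * G.gamma u x) = ∑ y, a y ^ 2 := by
    rw [WGraph.gamma, G.m_mul_gammaB]
    rw [Finset.sum_congr rfl fun y _ => (ha2 y)]; ring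
  have hT : 2 * (G.m x * G.gamma v x) = ∑ y, b y ^ 2 := by
    rw [WGraph.gamma, G.m_mul_gammaB]
    rw [Finset.sum_congr rfl fun y _ => (hb2 y)]; ring
  have hCS : (∑ y, a y * b y) ≤ Real.sqrt (∑ y, a y ^ 2) * Real.sqrt (∑ y, b y ^ 2) := by
    have h := Finset.sum_mul_sq_le_sq_mul_sq Finset.univ a b
    have h1 : (∑ y, a y * b y) ≤ |∑ y, a y * b y| := le_abs_self _
    calc (∑ y, a y * b y) ≤ |∑ y, a y * b y| := h1
      _ = Real.sqrt ((∑ y, a y * b y) ^ 2) := (Real.sqrt_sq_eq_abs _).symm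
      _ ≤ Real.sqrt ((∑ y, a y ^ 2) * (∑ y, b y ^ 2)) := Real.sqrt_le_sqrt h
      _ = _ := Real.sqrt_mul (Finset.sum_nonneg fun y _ => sq_nonneg _) _
  have hgu := G.gamma_nonneg' u x
  have hgv := G.gamma_nonneg' v x
  have hm := G.mpos x
  have main : G.m x * G.gammaB u v x ≤ G.m x * (Real.sqrt (G.gamma u x) * Real.sqrt (G.gamma v x)) := by
    rw [G.m_mul_gammaB]
    calc (1/2) * ∑ y, G.w x y * ((u y - u x) * (v y - v x))
        = (1/2) * ∑ y, a y * b y := by rw [Finset.sum_congr rfl fun y _ => hab y]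
      _ ≤ (1/2) * (Real.sqrt (∑ y, a y ^ 2) * Real.sqrt (∑ y, b y ^ 2)) := by
          linarith [hCS]
      _ = (1/2) * (Real.sqrt (2 * (G.m x * G.gamma u x)) * Real.sqrt (2 * (G.m x * G.gamma v x))) := by
          rw [hS, hT]
      _ = G.m x * (Real.sqrt (G.gamma u x) * Real.sqrt (G.gamma v x)) := by
          rw [Real.sqrt_mul (by norm_num : (0:ℝ) ≤ 2), Real.sqrt_mul (by norm_num : (0:ℝ) ≤ 2),
            Real.sqrt_mul hm.le, Real.sqrt_mul hm.le]
          have h2 : Real.sqrt 2 * Real.sqrt 2 = 2 := Real.mul_self_sqrt (by norm_num)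
          have hmm : Real.sqrt (G.m x) * Real.sqrt (G.m x) = G.m x := Real.mul_self_sqrt hm.le
          rw [show (1/2 : ℝ) * (Real.sqrt 2 * (Real.sqrt (G.m x) * Real.sqrt (G.gamma u x))
            * (Real.sqrt 2 * (Real.sqrt (G.m x) * Real.sqrt (G.gamma v x))))
            = (1/2) * ((Real.sqrt 2 * Real.sqrt 2) * ((Real.sqrt (G.m x) * Real.sqrt (G.m x))
              * (Real.sqrt (G.gamma u x) * Real.sqrt (G.gamma v x)))) from by ring, h2, hmm]
          ring
  exact le_of_mul_le_mul_left (by linarith [main]) hm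

end Aux2
section Aux3
open Real Finset WGraph
variable {V : Type*} [Fintype V] [Nonempty V]

lemma WGraph.hasDerivAt_P (G : WGraph V) {P : ℝ → (V → ℝ) → V → ℝ}
    (hP : G.IsSemigroup 0 P) (f : V → ℝ) (x : V) {s : ℝ} (hs : 0 < s) :
    HasDerivAt (fun s => P s f x) (G.lap (P s f) x) s := by
  have h := hP.2.2.2.2.2.2.1 f (WGraph.bdd_fintype f) x s hs
  simpa using h

lemma WGraph.selfadjoint (G : WGraph V) {P : ℝ → (V → ℝ) → V → ℝ}
    (hP : G.IsSemigroup 0 P) (u v : V → ℝ) {r : ℝ} (hr : 0 < r) :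
    ∑ x, G.m x * (P r u x * v x) = ∑ x, G.m x * (u x * P r v x) := by
  set φ : ℝ → ℝ := fun s => ∑ x, G.m x * (P (r - s) u x * P s v x) with hφ
  have hcontP : ∀ (g : V → ℝ) (x : V), ContinuousOn (fun s => P s g x) (Set.Ici 0) :=
    fun g x => hP.2.2.2.2.2.1 g (WGraph.bdd_fintype g) x
  have hcont : ContinuousOn φ (Set.Icc 0 r) := by
    apply continuousOn_finset_sum
    intro x _
    apply ContinuousOn.mul (continuousOn_const)
    apply ContinuousOn.mul
    · refine ContinuousOn.comp (hcontP u x) ((continuousOn_const).sub continuousOn_id) ?_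
      intro s hs
      exact Set.mem_Ici.mpr (by simp [sub_nonneg]; exact hs.2)
    · exact (hcontP v x).mono (Set.Icc_subset_Ici_self)
  have hD : ∀ s ∈ Set.Ioo (0:ℝ) r, HasDerivAt φ 0 s := by
    intro s hs
    have hderx : ∀ x : V, HasDerivAt (fun s => G.m x * (P (r - s) u x * P s v x))
        (G.m x * (-(G.lap (P (r - s) u) x) * P s v x + P (r - s) u x * G.lap (P s v) x)) s := by
      intro x
      have hinner : HasDerivAt (fun s : ℝ => r - s) (-1) s := (hasDerivAt_id s).const_sub r
      have houter := G.hasDerivAt_P hP u x (sub_pos.mpr hs.2)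
      have hu : HasDerivAt (fun s => P (r - s) u x) (G.lap (P (r - s) u) x * (-1)) s :=
        HasDerivAt.comp s houter hinner
      have hv := G.hasDerivAt_P hP v x hs.1
      have := (hu.fun_mul hv).const_mul (G.m x)
      refine this.congr_deriv ?_
      ring
    have hsum : HasDerivAt φ
        (∑ x, G.m x * (-(G.lap (P (r - s) u) x) * P s v x + P (r - s) u x * G.lap (P s v) x)) s :=
      HasDerivAt.fun_sum fun x _ => hderx x
    have hzero : (∑ x, G.m x * (-(G.lap (P (r - s) u) x) * P s v x + P (r - s) u x * G.lap (P s v) x)) = 0 := by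
      have e1 : (∑ x, G.m x * (-(G.lap (P (r - s) u) x) * P s v x + P (r - s) u x * G.lap (P s v) x))
          = -(∑ x, G.m x * (P s v x * G.lap (P (r - s) u) x)) + ∑ x, G.m x * (P (r - s) u x * G.lap (P s v) x) := by
        rw [← Finset.sum_neg_distrib, ← Finset.sum_add_distrib]
        exact Finset.sum_congr rfl fun x _ => by ring
      rw [e1, G.green (P s v) (P (r - s) u), G.green (P (r - s) u) (P s v)]
      have : (∑ x, G.m x * G.gammaB (P s v) (P (r - s) u) x)
          = ∑ x, G.m x * G.gammaB (P (r - s) u) (P s v) x :=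
        Finset.sum_congr rfl fun x _ => by rw [G.gammaB_comm]
      rw [this]; ring
    rw [hzero] at hsum; exact hsum
  have hdiff : DifferentiableOn ℝ φ (interior (Set.Icc 0 r)) := by
    rw [interior_Icc]
    exact fun s hs => ((hD s hs).differentiableAt).differentiableWithinAt
  have hderiv0 : ∀ s ∈ interior (Set.Icc 0 r), deriv φ s = 0 := by
    rw [interior_Icc]; exact fun s hs => (hD s hs).deriv
  have hmono : MonotoneOn φ (Set.Icc 0 r) :=
    monotoneOn_of_deriv_nonneg (convex_Icc 0 r) hcont hdiff (fun s hs => le_of_eq (hderiv0 s hs).symm)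
  have hanti : AntitoneOn φ (Set.Icc 0 r) :=
    antitoneOn_of_deriv_nonpos (convex_Icc 0 r) hcont hdiff (fun s hs => le_of_eq (hderiv0 s hs))
  have h0 : (0:ℝ) ∈ Set.Icc (0:ℝ) r := Set.mem_Icc.mpr ⟨le_refl 0, hr.le⟩
  have hrr : r ∈ Set.Icc (0:ℝ) r := Set.mem_Icc.mpr ⟨hr.le, le_refl r⟩
  have heq : φ 0 = φ r := le_antisymm (hmono h0 hrr hr.le) (hanti h0 hrr hr.le)
  have e0 : φ 0 = ∑ x, G.m x * (P r u x * v x) := by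
    rw [hφ]; simp only [sub_zero, hP.1]
  have er : φ r = ∑ x, G.m x * (u x * P r v x) := by
    rw [hφ]; simp only [sub_self, hP.1]
  rw [← e0, ← er, heq]

end Aux3
open WGraph in
theorem l1_heat_semigroup_estimate {V : Type*} [Fintype V] [Nonempty V]
    (G : WGraph V) (hconn : G.toSimpleGraph.Preconnected)
    (ρ : V → ℝ) (hCD : G.CD ρ ⊤) (K T : ℝ) (hK : 0 < K) (hT : 0 < T)
    (P : ℝ → (V → ℝ) → V → ℝ) (hP : G.IsSemigroup 0 P)
    (hgrad : ∀ g : V → ℝ, ∀ s, 0 < s → ∀ x,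
      G.gamma (P s g) x ≤ Real.exp (K * T) / s * (⨆ y, |g y|) ^ 2)
    (f : V → ℝ) (t : ℝ) (ht : 0 < t) :
    ∑ x, G.m x * |f x - P t f x|
      ≤ 2 * Real.exp (K * T) * Real.sqrt t * ∑ x, G.m x * Real.sqrt (G.gamma f x) := by
  classical
  set g : V → ℝ := fun x => if f x - P t f x < 0 then -1 else 1 with hg
  have hg1 : ∀ x, |g x| = 1 := by
    intro x; rw [hg]; by_cases h : f x - P t f x < 0 <;> simp [h]
  have hsup : (⨆ y, |g y|) = 1 := by
    have e : (fun y => |g y|) = fun _ => (1:ℝ) := funext hg1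
    rw [e]; exact ciSup_const
  set S : ℝ := ∑ x, G.m x * Real.sqrt (G.gamma f x) with hSdef
  have hS0 : 0 ≤ S :=
    Finset.sum_nonneg fun x _ => mul_nonneg (G.mpos x).le (Real.sqrt_nonneg _)
  set E : ℝ := Real.sqrt (Real.exp (K * T)) with hEdef
  have hE0 : 0 ≤ E := Real.sqrt_nonneg _
  set C : ℝ := E * S with hCdef
  have hC0 : 0 ≤ C := mul_nonneg hE0 hS0
  set ψ : ℝ → ℝ := fun s => ∑ x, G.m x * (P s g x * f x) with hψdef
  set χ : ℝ → ℝ := fun s => ψ s + 2 * C * Real.sqrt s with hχdef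
  have hcontP : ∀ (u : V → ℝ) (x : V), ContinuousOn (fun s => P s u x) (Set.Ici 0) :=
    fun u x => hP.2.2.2.2.2.1 u (WGraph.bdd_fintype u) x
  have hψderiv : ∀ s ∈ Set.Ioo (0:ℝ) t,
      HasDerivAt ψ (∑ x, G.m x * (G.lap (P s g) x * f x)) s := fun s hs =>
    HasDerivAt.fun_sum fun x _ =>
      ((G.hasDerivAt_P hP g x hs.1).mul_const (f x)).const_mul (G.m x)
  have hbound : ∀ s ∈ Set.Ioo (0:ℝ) t,
      -(C / Real.sqrt s) ≤ ∑ x, G.m x * (G.lap (P s g) x * f x) := by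
    intro s hs
    have hgreen : (∑ x, G.m x * (G.lap (P s g) x * f x))
        = -∑ x, G.m x * G.gammaB f (P s g) x := by
      rw [← G.green f (P s g)]
      exact Finset.sum_congr rfl fun x _ => by ring
    rw [hgreen, neg_le_neg_iff]
    have hps : ∀ x, G.gamma (P s g) x ≤ Real.exp (K * T) / s := by
      intro x
      have h := hgrad g s hs.1 x
      rwa [hsup, one_pow, mul_one] at h
    have hsq : ∀ x, Real.sqrt (G.gamma (P s g) x) ≤ E / Real.sqrt s := by
      intro x
      calc Real.sqrt (G.gamma (P s g) x) ≤ Real.sqrt (Real.exp (K * T) / s) :=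
            Real.sqrt_le_sqrt (hps x)
        _ = E / Real.sqrt s := by rw [Real.sqrt_div (Real.exp_nonneg _)]
    have hpt : ∀ x, G.m x * G.gammaB f (P s g) x
        ≤ G.m x * (Real.sqrt (G.gamma f x) * (E / Real.sqrt s)) := by
      intro x
      refine mul_le_mul_of_nonneg_left ?_ (G.mpos x).le
      calc G.gammaB f (P s g) x
          ≤ Real.sqrt (G.gamma f x) * Real.sqrt (G.gamma (P s g) x) := G.gammaB_le f (P s g) x
        _ ≤ Real.sqrt (G.gamma f x) * (E / Real.sqrt s) :=
            mul_le_mul_of_nonneg_left (hsq x) (Real.sqrt_nonneg _)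
    calc (∑ x, G.m x * G.gammaB f (P s g) x)
        ≤ ∑ x, G.m x * (Real.sqrt (G.gamma f x) * (E / Real.sqrt s)) :=
          Finset.sum_le_sum fun x _ => hpt x
      _ = S * (E / Real.sqrt s) := by
          rw [hSdef, Finset.sum_mul]
          exact Finset.sum_congr rfl fun x _ => by ring
      _ = C / Real.sqrt s := by rw [hCdef]; ring
  have hχcont : ContinuousOn χ (Set.Icc 0 t) := by
    apply ContinuousOn.add
    · apply continuousOn_finset_sum
      intro x _
      exact continuousOn_const.mul
        (((hcontP g x).mono Set.Icc_subset_Ici_self).mul continuousOn_const)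
    · exact (continuous_const.mul Real.continuous_sqrt).continuousOn
  have hχD : ∀ s ∈ Set.Ioo (0:ℝ) t,
      HasDerivAt χ ((∑ x, G.m x * (G.lap (P s g) x * f x)) + C / Real.sqrt s) s := by
    intro s hs
    have h2 : HasDerivAt (fun s => 2 * C * Real.sqrt s) (C / Real.sqrt s) s := by
      have h := (Real.hasDerivAt_sqrt hs.1.ne').const_mul (2 * C)
      have hsne : Real.sqrt s ≠ 0 := Real.sqrt_ne_zero'.mpr hs.1
      refine h.congr_deriv ?_
      field_simp
    exact (hψderiv s hs).add h2
  have hdiff : DifferentiableOn ℝ χ (interior (Set.Icc 0 t)) := by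
    rw [interior_Icc]
    exact fun s hs => ((hχD s hs).differentiableAt).differentiableWithinAt
  have hderiv0 : ∀ s ∈ interior (Set.Icc 0 t), 0 ≤ deriv χ s := by
    rw [interior_Icc]
    intro s hs
    rw [(hχD s hs).deriv]
    have := hbound s hs
    linarith
  have hmono : MonotoneOn χ (Set.Icc 0 t) :=
    monotoneOn_of_deriv_nonneg (convex_Icc 0 t) hχcont hdiff hderiv0
  have hle : χ 0 ≤ χ t :=
    hmono (Set.mem_Icc.mpr ⟨le_refl 0, ht.le⟩) (Set.mem_Icc.mpr ⟨ht.le, le_refl t⟩) ht.le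
  have hχ0 : χ 0 = ∑ x, G.m x * (g x * f x) := by
    rw [hχdef]
    simp only [Real.sqrt_zero, mul_zero, add_zero, hψdef, hP.1]
  have hψt : ψ t = ∑ x, G.m x * (g x * P t f x) := G.selfadjoint hP g f ht
  have hχt : χ t = (∑ x, G.m x * (g x * P t f x)) + 2 * C * Real.sqrt t := by
    rw [hχdef]; simp only [hψt]
  have habs : ∀ x, g x * (f x - P t f x) = |f x - P t f x| := by
    intro x
    rw [hg]
    by_cases h : f x - P t f x < 0
    · simp only [if_pos h, abs_of_neg h]; ring
    · push_neg at h
      simp only [if_neg (not_lt.mpr h), abs_of_nonneg h, one_mul]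
  have hmain : (∑ x, G.m x * |f x - P t f x|)
      = (∑ x, G.m x * (g x * f x)) - ∑ x, G.m x * (g x * P t f x) := by
    rw [← Finset.sum_sub_distrib]
    refine Finset.sum_congr rfl fun x _ => ?_
    rw [← habs x]; ring
  have hEexp : E ≤ Real.exp (K * T) := by
    have h1 : (1:ℝ) ≤ Real.exp (K * T) := Real.one_le_exp (by positivity)
    have h2 : E * E = Real.exp (K * T) := Real.mul_self_sqrt (Real.exp_nonneg _)
    nlinarith [sq_nonneg (E - 1)]
  have hstep : (∑ x, G.m x * |f x - P t f x|) ≤ 2 * C * Real.sqrt t := by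
    rw [hmain]
    rw [hχ0, hχt] at hle
    linarith
  calc (∑ x, G.m x * |f x - P t f x|) ≤ 2 * C * Real.sqrt t := hstep
    _ = 2 * E * Real.sqrt t * S := by rw [hCdef]; ring
    _ ≤ 2 * Real.exp (K * T) * Real.sqrt t * S :=
        mul_le_mul_of_nonneg_right
          (mul_le_mul_of_nonneg_right (by linarith) (Real.sqrt_nonneg t)) hS0
end
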